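/- arXiv:1804.05277 — 8 statements merged into one kernel-verified Lean document; each statement's English description precedes it below -/
import Mathlib

section
/- For every integer l ≥ 2, the number of brick-wall lattice paths of the first type in the rectangle R = {0,…,l−1} × {0,1,2} equals the Fibonacci number F_{l+3}, i.e. B^{(1)}_{l,3} = F_{l+3}. -/
/-- A step of a brick-wall lattice path. `t = true` corresponds to paths of the
first type (up-steps from even points, down-steps from odd points), `t = false`
to paths of the second type (up-steps from odd points, down-steps from even
points). Vertical steps are forbidden from points with first coordinate `0`. -/
def BrickStep (t : Bool) (p q : ℤ × ℤ) : Prop :=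
  q = (p.1 + 1, p.2) ∨
  (q = (p.1, p.2 + 1) ∧ p.1 ≠ 0 ∧ (if t then Even (p.1 + p.2) else Odd (p.1 + p.2))) ∨
  (q = (p.1, p.2 - 1) ∧ p.1 ≠ 0 ∧ (if t then Odd (p.1 + p.2) else Even (p.1 + p.2)))

/-- The set of brick-wall lattice paths (of the first type if `t = true`, of the
second type if `t = false`) in the rectangle `{0,…,l−1} × {0,…,w−1}`: nonempty
lists of pairwise distinct points of the rectangle, starting on the left side,
ending on the right side, whose consecutive differences are admissible steps. -/
def brickPaths (t : Bool) (l w : ℤ) : Set (List (ℤ × ℤ)) :=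
  {v | v ≠ [] ∧ v.Nodup ∧
    (∀ p ∈ v, 0 ≤ p.1 ∧ p.1 ≤ l - 1 ∧ 0 ≤ p.2 ∧ p.2 ≤ w - 1) ∧
    (∀ p ∈ v.head?, p.1 = 0) ∧
    (∀ p ∈ v.getLast?, p.1 = l - 1) ∧
    List.Chain' (BrickStep t) v}

/-!
A path of the first type can make at most one vertical step in each column, because the vertical
neighbour of a point is an involution and a second vertical step would revisit a point. Hence a
path ending at `(c, y)` with `c ≠ 0` arrives either horizontally from `(c - 1, y)`, or from
`(c - 1, y')` through `(c, y')`, where `(c, y')` is the vertical neighbour of `(c, y)`. In width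
three the rows pair up as `{1, 2}` and `{0, 1}` in alternate columns, so the numbers of paths
ending in the rows of a column are consecutive Fibonacci numbers, and the three add up to
`F (l + 3)`.
-/

namespace BrickWall

variable {w : ℤ} {p q : ℤ × ℤ} {u v : List (ℤ × ℤ)}

/-- The vertical neighbour of `p`: the target of a vertical step from `p` and, being an involution,
also the source of a vertical step into `p`. -/
def brickPartner (p : ℤ × ℤ) : ℤ × ℤ :=
  (p.1, if Even (p.1 + p.2) then p.2 + 1 else p.2 - 1)

@[simp]
theorem brickPartner_fst (p : ℤ × ℤ) : (brickPartner p).1 = p.1 := rfl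

theorem brickPartner_ne (p : ℤ × ℤ) : brickPartner p ≠ p := by
  unfold brickPartner
  split_ifs <;> simp [Prod.ext_iff]

@[simp]
theorem brickPartner_brickPartner (p : ℤ × ℤ) : brickPartner (brickPartner p) = p := by
  obtain ⟨x, y⟩ := p
  by_cases h : Even (x + y) <;>
    simp [brickPartner, h, ← add_assoc, ← add_sub_assoc]

theorem brickStep_true_iff :
    BrickStep true p q ↔ q = (p.1 + 1, p.2) ∨ p.1 ≠ 0 ∧ q = brickPartner p := by
  by_cases h : Even (p.1 + p.2) <;>
    simp [BrickStep, brickPartner, h, ← Int.not_even_iff_odd, and_comm]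

theorem fst_le_of_brickStep (h : BrickStep true p q) : p.1 ≤ q.1 := by
  rcases brickStep_true_iff.1 h with rfl | ⟨-, rfl⟩ <;> simp

theorem eq_or_eq_brickPartner_of_brickStep (h : BrickStep true p q) :
    p = (q.1 - 1, q.2) ∨ q.1 ≠ 0 ∧ p = brickPartner q := by
  rcases brickStep_true_iff.1 h with rfl | ⟨hp, rfl⟩ <;> simp_all

theorem brickStep_brickPartner (hq : q.1 ≠ 0) : BrickStep true (brickPartner q) q :=
  brickStep_true_iff.2 (Or.inr ⟨hq, by simp⟩)

theorem brickStep_horizontal (q : ℤ × ℤ) : BrickStep true (q.1 - 1, q.2) q :=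
  brickStep_true_iff.2 (Or.inl (by simp))

/-- No column bound is needed: columns never decrease along a path, so they stay between `0` and
`q.1` (`brickPathsTo_fst_bounds`). -/
def brickPathsTo (w : ℤ) (q : ℤ × ℤ) : Set (List (ℤ × ℤ)) :=
  {v | v.Nodup ∧ (∀ p ∈ v, 0 ≤ p.2 ∧ p.2 ≤ w - 1) ∧ (∀ p ∈ v.head?, p.1 = 0) ∧
    v.getLast? = some q ∧ v.IsChain (BrickStep true)}

theorem mem_of_mem_brickPathsTo (hv : v ∈ brickPathsTo w q) : q ∈ v :=
  List.mem_of_getLast? hv.2.2.2.1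

theorem disjoint_brickPathsTo (hpq : p ≠ q) : Disjoint (brickPathsTo w p) (brickPathsTo w q) :=
  Set.disjoint_left.2 fun _ hp hq =>
    hpq (Option.some_injective _ (hp.2.2.2.1.symm.trans hq.2.2.2.1))

theorem brickPathsTo_eq_empty (hq : ¬(0 ≤ q.2 ∧ q.2 ≤ w - 1)) : brickPathsTo w q = ∅ :=
  Set.eq_empty_of_forall_notMem fun _ hv => hq (hv.2.1 q (mem_of_mem_brickPathsTo hv))

theorem brickPathsTo_fst_bounds (hv : v ∈ brickPathsTo w q) (hp : p ∈ v) :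
    0 ≤ p.1 ∧ p.1 ≤ q.1 := by
  obtain ⟨-, -, hhead, hlast, hchain⟩ := hv
  have hmono : v.Pairwise (fun a b => a.1 ≤ b.1) :=
    (hchain.imp fun _ _ h => fst_le_of_brickStep h).pairwise
  have hv : v ≠ [] := List.ne_nil_of_mem hp
  refine ⟨?_, ?_⟩
  · rw [← hhead _ (List.head_mem_head? hv)]
    exact hmono.rel_head_of_rel_head_head hp le_rfl
  · obtain rfl : v.getLast hv = q := by simpa [List.getLast?_eq_some_getLast hv] using hlast
    exact hmono.rel_getLast_of_rel_getLast_getLast hp le_rfl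

theorem mem_brickPathsTo_of_append {s : List (ℤ × ℤ)} (hv : u ++ s ∈ brickPathsTo w q)
    (hu : u.getLast? = some p) : u ∈ brickPathsTo w p := by
  obtain ⟨hnodup, hrows, hhead, -, hchain⟩ := hv
  have hne : u ≠ [] := List.ne_nil_of_mem (List.mem_of_getLast? hu)
  exact ⟨hnodup.sublist (List.sublist_append_left u s),
    fun r hr => hrows r (List.mem_append_left s hr),
    fun r hr => hhead r (by rwa [List.head?_append_of_ne_nil _ hne]), hu, hchain.left_of_append⟩

theorem concat_mem_brickPathsTo (hu : u ∈ brickPathsTo w p) (hqu : q ∉ u)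
    (hrow : 0 ≤ q.2 ∧ q.2 ≤ w - 1) (hpq : BrickStep true p q) : u ++ [q] ∈ brickPathsTo w q := by
  obtain ⟨hnodup, hrows, hhead, hlast, hchain⟩ := hu
  have hne : u ≠ [] := List.ne_nil_of_mem (List.mem_of_getLast? hlast)
  refine ⟨List.nodup_append.2 ⟨hnodup, List.nodup_singleton q,
    fun r hr _ hq' hrq => hqu (by simp_all)⟩, ?_,
    fun r hr => hhead r (by rwa [List.head?_append_of_ne_nil _ hne] at hr),
    List.getLast?_concat, List.isChain_append.2 ⟨hchain, List.isChain_singleton q, ?_⟩⟩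
  · simp only [List.mem_append, List.mem_singleton]
    rintro r (hr | rfl)
    exacts [hrows r hr, hrow]
  · simp_all

theorem exists_eq_concat_of_mem_brickPathsTo (hv : v ∈ brickPathsTo w q) (hq : q.1 ≠ 0) :
    ∃ u p, v = u ++ [q] ∧ u ∈ brickPathsTo w p ∧ BrickStep true p q := by
  obtain ⟨u, rfl⟩ := List.getLast?_eq_some_iff.1 hv.2.2.2.1
  obtain ⟨p, hp⟩ : ∃ p, u.getLast? = some p := by
    refine Option.ne_none_iff_exists'.1 fun hu => hq ?_
    rw [List.getLast?_eq_none_iff.1 hu] at hv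
    exact hv.2.2.1 q rfl
  refine ⟨u, p, rfl, mem_brickPathsTo_of_append hv hp, ?_⟩
  exact List.isChain_append.1 hv.2.2.2.2 |>.2.2 p hp q rfl

theorem notMem_of_mem_brickPathsTo (hu : u ∈ brickPathsTo w p) (hpq : p.1 < q.1) : q ∉ u :=
  fun hq => (brickPathsTo_fst_bounds hu hq).2.not_gt hpq

theorem brickPathsTo_zero {y : ℤ} (hy : 0 ≤ y ∧ y ≤ w - 1) :
    brickPathsTo w (0, y) = {[(0, y)]} := by
  ext v
  refine ⟨fun hv => ?_, ?_⟩
  · obtain ⟨u, rfl⟩ := List.getLast?_eq_some_iff.1 hv.2.2.2.1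
    rcases List.eq_nil_or_concat u with rfl | ⟨u', p, rfl⟩
    · rfl
    have hstep := (List.isChain_append.1 hv.2.2.2.2).2.2 p (by simp) _ rfl
    rcases eq_or_eq_brickPartner_of_brickStep hstep with rfl | ⟨h, -⟩
    · have := brickPathsTo_fst_bounds hv (p := (0 - 1, y)) (by simp)
      norm_num at this
    · exact absurd rfl h
  · rintro rfl
    exact ⟨List.nodup_singleton _, by simpa using hy, by simp, rfl, List.isChain_singleton _⟩

theorem brickPathsTo_eq_union (hq : q.1 ≠ 0) (hrow : 0 ≤ q.2 ∧ q.2 ≤ w - 1) :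
    brickPathsTo w q = (· ++ [q]) '' brickPathsTo w (q.1 - 1, q.2) ∪
      (· ++ [brickPartner q, q]) '' brickPathsTo w (q.1 - 1, (brickPartner q).2) := by
  apply Set.Subset.antisymm
  · intro v hv
    obtain ⟨u, p, rfl, hu, hpq⟩ := exists_eq_concat_of_mem_brickPathsTo hv hq
    rcases eq_or_eq_brickPartner_of_brickStep hpq with rfl | ⟨-, rfl⟩
    · exact Or.inl ⟨u, hu, rfl⟩
    obtain ⟨u', r, rfl, hu', hrp⟩ := exists_eq_concat_of_mem_brickPathsTo hu hq
    rcases eq_or_eq_brickPartner_of_brickStep hrp with rfl | ⟨-, hr⟩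
    · exact Or.inr ⟨u', hu', by simp⟩
    · -- a second vertical step would return to `q`
      rw [brickPartner_brickPartner] at hr
      subst hr
      exact absurd rfl ((List.nodup_append.1 hv.1).2.2 r
        (List.mem_append_left _ (mem_of_mem_brickPathsTo hu')) r (List.mem_singleton_self r))
  · rintro v (⟨u, hu, rfl⟩ | ⟨u, hu, rfl⟩)
    · exact concat_mem_brickPathsTo hu (notMem_of_mem_brickPathsTo hu (by simp)) hrow
        (brickStep_horizontal q)
    · have hrow' := hu.2.1 _ (mem_of_mem_brickPathsTo hu)
      have hpartner := concat_mem_brickPathsTo (q := brickPartner q) hu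
        (notMem_of_mem_brickPathsTo hu (by simp)) hrow'
        (brickStep_horizontal (brickPartner q))
      have hqu : q ∉ u ++ [brickPartner q] := by
        simpa [(brickPartner_ne q).symm] using notMem_of_mem_brickPathsTo hu (by simp)
      simpa using concat_mem_brickPathsTo hpartner hqu hrow (brickStep_brickPartner hq)

theorem encard_brickPathsTo (hq : q.1 ≠ 0) (hrow : 0 ≤ q.2 ∧ q.2 ≤ w - 1) :
    (brickPathsTo w q).encard = (brickPathsTo w (q.1 - 1, q.2)).encard +
      (brickPathsTo w (q.1 - 1, (brickPartner q).2)).encard := by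
  rw [brickPathsTo_eq_union hq hrow, Set.encard_union_eq,
    (List.append_left_injective _).encard_image, (List.append_left_injective _).encard_image]
  rw [Set.disjoint_left]
  rintro _ ⟨u, hu, rfl⟩ ⟨u', -, hu'⟩
  have : u = u' ++ [brickPartner q] := List.append_cancel_right (by simpa using hu'.symm)
  have hlast := hu.2.2.2.1
  simp only [this, List.getLast?_concat, Option.some.injEq, Prod.ext_iff, brickPartner_fst] at hlast
  omega

theorem brickPaths_true_eq_iUnion (l w : ℤ) :
    brickPaths true l w = ⋃ y, brickPathsTo w (l - 1, y) := by
  ext v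
  simp only [Set.mem_iUnion]
  constructor
  · rintro ⟨hne, hnodup, hpts, hhead, hlast, hchain⟩
    obtain ⟨q, hq⟩ := Option.ne_none_iff_exists'.1 (mt List.getLast?_eq_none_iff.1 hne)
    refine ⟨q.2, hnodup, fun p hp => ⟨(hpts p hp).2.2.1, (hpts p hp).2.2.2⟩, hhead, ?_, hchain⟩
    rw [hq, ← hlast q hq]
  · rintro ⟨y, hv⟩
    obtain ⟨hnodup, hrows, hhead, hlast, hchain⟩ := hv
    refine ⟨fun h => by simp [h] at hlast, hnodup, fun p hp => ?_, hhead, by simp [hlast], hchain⟩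
    have := brickPathsTo_fst_bounds ⟨hnodup, hrows, hhead, hlast, hchain⟩ hp
    exact ⟨this.1, this.2, hrows p hp⟩

theorem encard_brickPathsTo_natCast_succ (n : ℕ) {y : ℤ} (hy : 0 ≤ y ∧ y ≤ w - 1) :
    (brickPathsTo w ((n : ℤ) + 1, y)).encard = (brickPathsTo w (n, y)).encard +
      (brickPathsTo w (n, if Even ((n : ℤ) + 1 + y) then y + 1 else y - 1)).encard := by
  simpa [brickPartner] using encard_brickPathsTo (q := ((n : ℤ) + 1, y)) (by omega) hy

theorem encard_brickPathsTo_three_succ_of_even {n : ℕ} (hn : Even n) :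
    (brickPathsTo 3 ((n : ℤ) + 1, 0)).encard = (brickPathsTo 3 (n, 0)).encard ∧
    (brickPathsTo 3 ((n : ℤ) + 1, 1)).encard =
      (brickPathsTo 3 (n, 1)).encard + (brickPathsTo 3 (n, 2)).encard ∧
    (brickPathsTo 3 ((n : ℤ) + 1, 2)).encard =
      (brickPathsTo 3 (n, 2)).encard + (brickPathsTo 3 (n, 1)).encard := by
  have hn' : ¬Odd n := Nat.not_odd_iff_even.2 hn
  refine ⟨?_, ?_, ?_⟩ <;> rw [encard_brickPathsTo_natCast_succ n (by norm_num)] <;>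
    simp [hn, hn', parity_simps, brickPathsTo_eq_empty]

theorem encard_brickPathsTo_three_succ_of_odd {n : ℕ} (hn : Odd n) :
    (brickPathsTo 3 ((n : ℤ) + 1, 0)).encard =
      (brickPathsTo 3 (n, 0)).encard + (brickPathsTo 3 (n, 1)).encard ∧
    (brickPathsTo 3 ((n : ℤ) + 1, 1)).encard =
      (brickPathsTo 3 (n, 1)).encard + (brickPathsTo 3 (n, 0)).encard ∧
    (brickPathsTo 3 ((n : ℤ) + 1, 2)).encard = (brickPathsTo 3 (n, 2)).encard := by
  have hn' : ¬Even n := Nat.not_even_iff_odd.2 hn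
  refine ⟨?_, ?_, ?_⟩ <;> rw [encard_brickPathsTo_natCast_succ n (by norm_num)] <;>
    simp [hn, hn', parity_simps, brickPathsTo_eq_empty]

theorem encard_brickPathsTo_three (n : ℕ) :
    (Even n → (brickPathsTo 3 (n, 0)).encard = Nat.fib (n + 2) ∧
      (brickPathsTo 3 (n, 1)).encard = Nat.fib (n + 2) ∧
      (brickPathsTo 3 (n, 2)).encard = Nat.fib (n + 1)) ∧
    (Odd n → (brickPathsTo 3 (n, 0)).encard = Nat.fib (n + 1) ∧
      (brickPathsTo 3 (n, 1)).encard = Nat.fib (n + 2) ∧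
      (brickPathsTo 3 (n, 2)).encard = Nat.fib (n + 2)) := by
  induction n with
  | zero => simp [brickPathsTo_zero]
  | succ n ih =>
    have hfib : (Nat.fib (n + 1) : ℕ∞) + Nat.fib (n + 2) = Nat.fib (n + 3) := by
      rw [← Nat.cast_add, ← Nat.fib_add_two]
    push_cast
    rcases Nat.even_or_odd n with hn | hn
    · obtain ⟨c₀, c₁, c₂⟩ := ih.1 hn
      obtain ⟨d₀, d₁, d₂⟩ := encard_brickPathsTo_three_succ_of_even hn
      refine ⟨fun h => absurd hn (Nat.even_add_one.1 h), fun _ => ?_⟩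
      rw [d₀, d₁, d₂, c₀, c₁, c₂, add_comm _ (Nat.fib (n + 1) : ℕ∞), hfib]
      exact ⟨rfl, rfl, rfl⟩
    · obtain ⟨c₀, c₁, c₂⟩ := ih.2 hn
      obtain ⟨d₀, d₁, d₂⟩ := encard_brickPathsTo_three_succ_of_odd hn
      refine ⟨fun _ => ?_, fun h => absurd hn (Nat.odd_add_one.1 h)⟩
      rw [d₀, d₁, d₂, c₀, c₁, c₂, add_comm _ (Nat.fib (n + 1) : ℕ∞), hfib]
      exact ⟨rfl, rfl, rfl⟩

theorem brickPaths_true_three_eq_union (l : ℤ) :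
    brickPaths true l 3 =
      brickPathsTo 3 (l - 1, 0) ∪ brickPathsTo 3 (l - 1, 1) ∪ brickPathsTo 3 (l - 1, 2) := by
  rw [brickPaths_true_eq_iUnion]
  ext v
  simp only [Set.mem_iUnion, Set.mem_union]
  constructor
  · rintro ⟨y, hv⟩
    have hy := hv.2.1 _ (mem_of_mem_brickPathsTo hv)
    obtain rfl | rfl | rfl : y = 0 ∨ y = 1 ∨ y = 2 := by omega
    all_goals simp [hv]
  · rintro ((h | h) | h) <;> exact ⟨_, h⟩

theorem encard_brickPaths_true_three (n : ℕ) :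
    (brickPaths true ((n : ℤ) + 1) 3).encard = Nat.fib (n + 4) := by
  have hfib₃ : Nat.fib (n + 3) = Nat.fib (n + 1) + Nat.fib (n + 2) := Nat.fib_add_two
  have hfib₄ : Nat.fib (n + 4) = Nat.fib (n + 2) + Nat.fib (n + 3) := Nat.fib_add_two
  rw [brickPaths_true_three_eq_union, add_sub_cancel_right, Set.encard_union_eq,
    Set.encard_union_eq]
  · rcases Nat.even_or_odd n with hn | hn
    · obtain ⟨c₀, c₁, c₂⟩ := (encard_brickPathsTo_three n).1 hn
      rw [c₀, c₁, c₂]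
      norm_cast
      omega
    · obtain ⟨c₀, c₁, c₂⟩ := (encard_brickPathsTo_three n).2 hn
      rw [c₀, c₁, c₂]
      norm_cast
      omega
  · exact disjoint_brickPathsTo (by simp)
  · exact (disjoint_brickPathsTo (by simp)).union_left (disjoint_brickPathsTo (by simp))

end BrickWall

/-- For every integer `l ≥ 2`, the number of brick-wall lattice paths of the
first type in the rectangle `{0,…,l−1} × {0,1,2}` equals the Fibonacci number
`F (l+3)`. -/
theorem brickPaths_width_three_eq_fib (l : ℕ) (hl : 2 ≤ l) :
    (brickPaths true (l : ℤ) 3).ncard = Nat.fib (l + 3) := by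
  obtain ⟨n, rfl⟩ : ∃ n, l = n + 1 := ⟨l - 1, by omega⟩
  rw [Set.ncard_def, Nat.cast_succ, BrickWall.encard_brickPaths_true_three]
  exact ENat.toNat_natCast _
end

section
/- For every integer k ≥ 1, the number of brick-wall lattice paths of the second type in the rectangle R = {0,…,2k} × {0,1,2,3} (width w = 4, odd length l = 2k+1) equals 4·3^k, i.e. B^{(2)}_{2k+1,4} = 4·3^k. -/
/-!
Two consecutive vertical steps of a brick-wall path in the same column either backtrack or
violate the parity rule, so a path takes at most one vertical step per column, and the direction
of a vertical step into `(x, y)` is forced by the parity of `x + y`. Hence the number `f_x(y)`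
of initial segments ending at `(x, y)` satisfies `f_{x+1}(y) = f_x(y) + f_x(y ∓ 1)`, where
`f_x` vanishes outside the strip. In width `4` this recursion, started from `f_0 ≡ 1`, makes
every odd column constant, `f_{2m+1} ≡ 2 · 3^m`; the next column is then
`(c, 2c, 2c, c)` with `c = 2 · 3^m`, whose total `6c = 4 · 3^(m+1)` counts the paths.
-/

variable {t : Bool} {w x y : ℤ}

theorem BrickStep.fst_le {p q : ℤ × ℤ} (h : BrickStep t p q) : p.1 ≤ q.1 := by
  rcases h with rfl | ⟨rfl, -⟩ | ⟨rfl, -⟩ <;> simp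

theorem BrickStep.ne {p q : ℤ × ℤ} (h : BrickStep t p q) : p ≠ q := by
  rcases h with rfl | ⟨rfl, -⟩ | ⟨rfl, -⟩ <;> simp [Prod.ext_iff, eq_sub_iff_add_eq]

theorem BrickStep.eq_or_fst_eq {p q : ℤ × ℤ} (h : BrickStep t p q) :
    q = (p.1 + 1, p.2) ∨ q.1 = p.1 := by
  rcases h with h | ⟨h, -⟩ | ⟨h, -⟩ <;> simp [h]

theorem BrickStep.eq_of_fst_eq_of_fst_eq {p q r : ℤ × ℤ} (hpq : BrickStep t p q)
    (hqr : BrickStep t q r) (h₁ : p.1 = q.1) (h₂ : q.1 = r.1) : p = r := by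
  rcases hpq with rfl | ⟨rfl, -, hpq⟩ | ⟨rfl, -, hpq⟩ <;>
    rcases hqr with rfl | ⟨rfl, -, hqr⟩ | ⟨rfl, -, hqr⟩ <;>
    cases t <;> simp_all [Int.even_iff, Int.odd_iff] <;> omega

theorem brickStep_false_vertical_iff {a b c : ℤ} :
    BrickStep false (a, b) (a, c) ↔ a ≠ 0 ∧ b = if Even (a + c) then c - 1 else c + 1 := by
  simp only [BrickStep, Prod.ext_iff, Bool.false_eq_true, if_false]
  split_ifs with h <;> constructor <;> grind [Int.even_add_one]

theorem fst_le_of_isChain_brickStep {u : List (ℤ × ℤ)} {p q : ℤ × ℤ}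
    (h : (u ++ [q]).IsChain (BrickStep t)) (hp : p ∈ u ++ [q]) : p.1 ≤ q.1 := by
  have hmono : (u ++ [q]).Pairwise (fun a b => a.1 ≤ b.1) := List.pairwise_map.1
    ((List.isChain_map Prod.fst).2 (h.imp fun _ _ => BrickStep.fst_le)).pairwise
  rcases List.mem_append.1 hp with hp | hp
  · exact (List.pairwise_append.1 hmono).2.2 p hp q (by simp)
  · simp_all

def brickPathsTo (t : Bool) (w : ℤ) (q : ℤ × ℤ) : Set (List (ℤ × ℤ)) :=
  {v | v.Nodup ∧ (∀ p ∈ v, 0 ≤ p.1 ∧ p.1 ≤ q.1 ∧ 0 ≤ p.2 ∧ p.2 ≤ w - 1) ∧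
    (∀ p ∈ v.head?, p.1 = 0) ∧ v.getLast? = some q ∧ v.IsChain (BrickStep t)}

theorem brickPathsTo_eq_empty (hy : y < 0 ∨ w - 1 < y) : brickPathsTo t w (x, y) = ∅ := by
  refine Set.eq_empty_of_forall_notMem fun v hv => ?_
  have := hv.2.1 _ (List.mem_of_getLast? hv.2.2.2.1)
  omega

theorem brickPathsTo_zero (hy : 0 ≤ y) (hyw : y ≤ w - 1) :
    brickPathsTo t w (0, y) = {[(0, y)]} := by
  ext v
  constructor
  · rintro ⟨-, hbd, -, hlast, hch⟩
    obtain ⟨u, rfl⟩ := List.getLast?_eq_some_iff.1 hlast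
    rcases u.eq_nil_or_concat' with rfl | ⟨u, q, rfl⟩
    · rfl
    have hstep : BrickStep t q (0, y) := by simp_all
    have hq := hbd q (by simp)
    rcases hstep with h | ⟨-, h, -⟩ | ⟨-, h, -⟩ <;> simp [Prod.ext_iff] at h <;> omega
  · rintro rfl
    exact ⟨by simp, by simp [hy]; omega, by simp, rfl, List.isChain_singleton _⟩

theorem mem_brickPathsTo_of_append {u s : List (ℤ × ℤ)} {q q' : ℤ × ℤ}
    (h : u ++ [q] ++ s ∈ brickPathsTo t w q') : u ++ [q] ∈ brickPathsTo t w q := by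
  obtain ⟨hnd, hbd, hhd, -, hch⟩ := h
  have hch' : (u ++ [q]).IsChain (BrickStep t) := (List.isChain_append.1 hch).1
  refine ⟨(List.nodup_append.1 hnd).1, fun p hp => ?_, fun p hp => hhd p ?_, by simp, hch'⟩
  · have := hbd p (List.mem_append_left _ hp)
    exact ⟨this.1, fst_le_of_isChain_brickStep hch' hp, this.2.2⟩
  · cases u <;> simp_all

theorem append_mem_brickPathsTo {u s : List (ℤ × ℤ)} {q : ℤ × ℤ}
    (hu : u ∈ brickPathsTo t w (x, y)) (hs : ∀ p ∈ s, p.1 = x + 1 ∧ 0 ≤ p.2 ∧ p.2 ≤ w - 1)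
    (hsn : s.Nodup) (hch : ((x, y) :: s).IsChain (BrickStep t)) (hq : s.getLast? = some q) :
    u ++ s ∈ brickPathsTo t w q := by
  obtain ⟨hnd, hbd, hhd, hlast, hchu⟩ := hu
  have hq1 : q.1 = x + 1 := (hs q (List.mem_of_getLast? hq)).1
  have hx : 0 ≤ x := (hbd _ (List.mem_of_getLast? hlast)).1
  refine ⟨List.nodup_append.2 ⟨hnd, hsn, fun a ha b hb hab => ?_⟩, fun p hp => ?_,
    fun p hp => hhd p ?_, by simp [hq], List.isChain_append.2 ⟨hchu, hch.tail, ?_⟩⟩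
  · have := (hbd a ha).2.1
    have := (hs b hb).1
    subst hab
    omega
  · rcases List.mem_append.1 hp with hp | hp
    · have := hbd p hp
      omega
    · have := hs p hp
      omega
  · cases u <;> simp_all
  · simp only [hlast, Option.mem_def, Option.some.injEq, forall_eq']
    exact hch.rel_head?

theorem exists_of_mem_brickPathsTo_succ (hx : 0 ≤ x) {v : List (ℤ × ℤ)}
    (hv : v ∈ brickPathsTo t w (x + 1, y)) :
    (∃ u ∈ brickPathsTo t w (x, y), v = u ++ [(x + 1, y)]) ∨
      ∃ y', BrickStep t (x + 1, y') (x + 1, y) ∧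
        ∃ u ∈ brickPathsTo t w (x, y'), v = u ++ [(x + 1, y'), (x + 1, y)] := by
  obtain ⟨v, rfl⟩ := List.getLast?_eq_some_iff.1 hv.2.2.2.1
  rcases v.eq_nil_or_concat' with rfl | ⟨v, ⟨a, y'⟩, rfl⟩
  · have := hv.2.2.1 (x + 1, y) (by simp)
    simp at this
    omega
  obtain ⟨-, hq⟩ : _ ∧ BrickStep t (a, y') (x + 1, y) := by simpa using hv.2.2.2.2
  rcases hq.eq_or_fst_eq with h | h
  · obtain ⟨rfl, rfl⟩ : a = x ∧ y' = y := by simp [Prod.ext_iff] at h; omega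
    exact Or.inl ⟨_, mem_brickPathsTo_of_append hv, rfl⟩
  obtain rfl : a = x + 1 := h.symm
  rcases v.eq_nil_or_concat' with rfl | ⟨v, r, rfl⟩
  · have := hv.2.2.1 (x + 1, y') (by simp)
    simp at this
    omega
  obtain ⟨-, hr, -⟩ : _ ∧ BrickStep t r (x + 1, y') ∧ _ := by simpa using hv.2.2.2.2
  rcases hr.eq_or_fst_eq with h | h
  · obtain rfl : r = (x, y') := by simp [Prod.ext_iff] at h ⊢; omega
    refine Or.inr ⟨y', hq, v ++ [(x, y')],
      mem_brickPathsTo_of_append (s := [(x + 1, y'), (x + 1, y)]) (q' := (x + 1, y)) ?_, by simp⟩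
    simpa using hv
  · obtain rfl := hr.eq_of_fst_eq_of_fst_eq hq h.symm rfl
    exact absurd hv.1 (by simp [List.nodup_append])

theorem brickPathsTo_succ (hx : 0 ≤ x) (hy : 0 ≤ y) (hyw : y ≤ w - 1) {y' : ℤ}
    (hy' : ∀ z, BrickStep t (x + 1, z) (x + 1, y) ↔ z = y') :
    brickPathsTo t w (x + 1, y) =
      (· ++ [(x + 1, y)]) '' brickPathsTo t w (x, y) ∪
        (· ++ [(x + 1, y'), (x + 1, y)]) '' brickPathsTo t w (x, y') := by
  ext v
  constructor
  · intro hv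
    rcases exists_of_mem_brickPathsTo_succ hx hv with ⟨u, hu, rfl⟩ | ⟨z, hz, u, hu, rfl⟩
    · exact Or.inl ⟨u, hu, rfl⟩
    · obtain rfl := (hy' z).1 hz
      exact Or.inr ⟨u, hu, rfl⟩
  · rintro (⟨u, hu, rfl⟩ | ⟨u, hu, rfl⟩)
    · exact append_mem_brickPathsTo hu (by simp [hy]; omega) (by simp) (by simp [BrickStep])
        (by simp)
    · have hstep := (hy' y').2 rfl
      have hne : y' ≠ y := fun h => hstep.ne (by rw [h])
      have hy'w := (hu.2.1 _ (List.mem_of_getLast? hu.2.2.2.1)).2.2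
      exact append_mem_brickPathsTo hu (by simp [hy]; omega) (by simp [hne])
        (List.isChain_cons_cons.2 ⟨Or.inl rfl, List.isChain_pair.2 hstep⟩) (by simp)

-- `encard` is additive on disjoint unions with no finiteness side conditions.
theorem encard_brickPathsTo_succ (hx : 0 ≤ x) (hy : 0 ≤ y) (hyw : y ≤ w - 1) {y' : ℤ}
    (hy' : ∀ z, BrickStep t (x + 1, z) (x + 1, y) ↔ z = y') :
    (brickPathsTo t w (x + 1, y)).encard =
      (brickPathsTo t w (x, y)).encard + (brickPathsTo t w (x, y')).encard := by
  rw [brickPathsTo_succ hx hy hyw hy', Set.encard_union_eq,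
    (List.append_left_injective _).encard_image, (List.append_left_injective _).encard_image]
  rw [Set.disjoint_left]
  rintro _ ⟨u, hu, rfl⟩ ⟨u', -, he⟩
  obtain rfl : u' ++ [(x + 1, y')] = u := by simpa using congrArg List.dropLast he
  simpa using hu.2.2.2.1

theorem encard_brickPathsTo_false_succ (hx : 0 ≤ x) (hy : 0 ≤ y) (hyw : y ≤ w - 1) :
    (brickPathsTo false w (x + 1, y)).encard = (brickPathsTo false w (x, y)).encard +
      (brickPathsTo false w (x, if Even (x + 1 + y) then y - 1 else y + 1)).encard :=
  encard_brickPathsTo_succ hx hy hyw fun z => by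
    rw [brickStep_false_vertical_iff]
    exact and_iff_right (by omega)

theorem brickPaths_eq_biUnion (t : Bool) (l : ℤ) (w : ℕ) :
    brickPaths t l w = ⋃ y ∈ (Finset.range w : Set ℕ), brickPathsTo t w (l - 1, y) := by
  ext v
  simp only [Set.mem_iUnion, Finset.coe_range, Set.mem_Iio]
  constructor
  · rintro ⟨hne, hnd, hbd, hhd, hlast, hch⟩
    obtain ⟨u, ⟨a, b⟩, rfl⟩ := v.eq_nil_or_concat'.resolve_left hne
    have hb := hbd (a, b) (by simp)
    obtain rfl : a = l - 1 := hlast (a, b) (by simp)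
    lift b to ℕ using hb.2.2.1
    exact ⟨b, by omega, hnd, hbd, hhd, by simp, hch⟩
  · rintro ⟨y, -, hnd, hbd, hhd, hlast, hch⟩
    exact ⟨by rintro rfl; simp at hlast, hnd, hbd, hhd, by simp [hlast], hch⟩

theorem encard_brickPaths (t : Bool) (l : ℤ) (w : ℕ) :
    (brickPaths t l w).encard = ∑ y ∈ Finset.range w, (brickPathsTo t w (l - 1, y)).encard := by
  rw [brickPaths_eq_biUnion, (Finset.finite_toSet _).encard_biUnion, finsum_mem_coe_finset]
  intro y _ y' _ hne
  rw [Function.onFun, Set.disjoint_left]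
  rintro v ⟨-, -, -, h, -⟩ ⟨-, -, -, h', -⟩
  simp_all

theorem encard_brickPathsTo_four_succ_eq_two_mul {c : ℕ∞} (hx : 0 ≤ x) (hx₂ : Even x)
    (hc : ∀ y, 0 ≤ y → y ≤ 3 → (brickPathsTo false 4 (x, y)).encard = c) :
    ∀ y, 0 ≤ y → y ≤ 3 → (brickPathsTo false 4 (x + 1, y)).encard = 2 * c := by
  have hx₂' : ¬Odd x := Int.not_odd_iff_even.2 hx₂
  intro y hy hy3
  rw [encard_brickPathsTo_false_succ hx hy (by omega)]
  interval_cases y <;>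
    simp [hx₂, hx₂', Int.even_add, hc, (by decide : ¬Even (3 : ℤ))] <;> ring

theorem encard_brickPathsTo_four_succ_of_odd {c : ℕ∞} (hx : 0 ≤ x) (hx₂ : Odd x)
    (hc : ∀ y, 0 ≤ y → y ≤ 3 → (brickPathsTo false 4 (x, y)).encard = c) :
    (brickPathsTo false 4 (x + 1, 0)).encard = c ∧
      (brickPathsTo false 4 (x + 1, 1)).encard = 2 * c ∧
      (brickPathsTo false 4 (x + 1, 2)).encard = 2 * c ∧
      (brickPathsTo false 4 (x + 1, 3)).encard = c := by
  have hx₂' : ¬Even x := Int.not_even_iff_odd.2 hx₂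
  refine ⟨?_, ?_, ?_, ?_⟩ <;>
    rw [encard_brickPathsTo_false_succ hx (by norm_num) (by norm_num)] <;>
    simp [hx₂, hx₂', Int.even_add, hc, brickPathsTo_eq_empty, (by decide : ¬Even (3 : ℤ))] <;>
    ring

theorem encard_brickPathsTo_four_succ_eq_three_mul {c : ℕ∞} (hx : 0 ≤ x) (hx₂ : Even x)
    (h₀ : (brickPathsTo false 4 (x, 0)).encard = c)
    (h₁ : (brickPathsTo false 4 (x, 1)).encard = 2 * c)
    (h₂ : (brickPathsTo false 4 (x, 2)).encard = 2 * c)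
    (h₃ : (brickPathsTo false 4 (x, 3)).encard = c) :
    ∀ y, 0 ≤ y → y ≤ 3 → (brickPathsTo false 4 (x + 1, y)).encard = 3 * c := by
  have hx₂' : ¬Odd x := Int.not_odd_iff_even.2 hx₂
  intro y hy hy3
  rw [encard_brickPathsTo_false_succ hx hy (by omega)]
  interval_cases y <;>
    simp [hx₂, hx₂', Int.even_add, h₀, h₁, h₂, h₃, (by decide : ¬Even (3 : ℤ))] <;> ring

theorem encard_brickPathsTo_four_odd (m : ℕ) :
    ∀ y, 0 ≤ y → y ≤ 3 → (brickPathsTo false 4 (2 * m + 1, y)).encard = 2 * 3 ^ m := by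
  induction m with
  | zero =>
    intro y hy hy3
    rw [Nat.cast_zero, mul_zero, zero_add, pow_zero, ← mul_one (2 : ℕ∞)]
    exact encard_brickPathsTo_four_succ_eq_two_mul le_rfl Even.zero (fun y hy hy3 => by
      rw [brickPathsTo_zero hy (by omega), Set.encard_singleton]) y hy hy3
  | succ m ih =>
    obtain ⟨h₀, h₁, h₂, h₃⟩ := encard_brickPathsTo_four_succ_of_odd (by positivity)
      (odd_two_mul_add_one _) ih
    intro y hy hy3
    rw [show 2 * ((m + 1 : ℕ) : ℤ) + 1 = 2 * m + 1 + 1 + 1 by push_cast; ring,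
      encard_brickPathsTo_four_succ_eq_three_mul (by positivity) (odd_two_mul_add_one _).add_one
        h₀ h₁ h₂ h₃ y hy hy3]
    ring

/-- For every integer `k ≥ 1`, the number of brick-wall lattice paths of the
second type in the rectangle `{0,…,2k} × {0,1,2,3}` (width 4, odd length
`l = 2k+1`) equals `4 · 3^k`. -/
theorem brickPaths_second_width_four_odd_length (k : ℕ) (hk : 1 ≤ k) :
    (brickPaths false (2 * (k : ℤ) + 1) 4).ncard = 4 * 3 ^ k := by
  obtain ⟨m, rfl⟩ := Nat.exists_eq_add_of_le' hk
  obtain ⟨h₀, h₁, h₂, h₃⟩ := encard_brickPathsTo_four_succ_of_odd (by positivity)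
    (odd_two_mul_add_one _) (encard_brickPathsTo_four_odd m)
  have hcount :
      (brickPaths false (2 * ((m + 1 : ℕ) : ℤ) + 1) 4).encard = 4 * 3 ^ (m + 1) := by
    rw [show (4 : ℤ) = (4 : ℕ) from rfl, encard_brickPaths,
      show 2 * ((m + 1 : ℕ) : ℤ) + 1 - 1 = 2 * m + 1 + 1 by push_cast; ring]
    simp only [Finset.sum_range_succ, Finset.sum_range_zero, Nat.cast_zero, Nat.cast_one,
      Nat.cast_ofNat, h₀, h₁, h₂, h₃]
    ring
  rw [Set.ncard_def, hcount]
  norm_cast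
end

section
/- For every integer k ≥ 1, the number of brick-wall lattice paths of the first type in the rectangle R = {0,…,2k−1} × {0,1,2,3} (width w = 4, even length l = 2k) equals 6·3^{k−1}, i.e. B^{(1)}_{2k,4} = 6·3^{k−1}. -/
/-!
A first-type path never takes two vertical steps in a row, since the second one would lead
back to where it came from, and it cannot step vertically in column 0. So a path is its starting
row together with, in each later column, the choice whether to take the single vertical step to
the brick-wall neighbour, when that neighbour lies in the rectangle. Counting the completions
column by column from the right: in an odd column only rows 1 and 2 can step vertically, so if
every row of the next column has c completions, the rows have weights (1, 2, 2, 1) · c; in an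
even column rows 0 ↔ 1 and 2 ↔ 3 are paired, which turns the weights (1, 2, 2, 1) · c into 3c
in every row. Column 1 is odd, at distance 2(k − 1) from the last column, which gives
(1 + 2 + 2 + 1) · 3^(k−1).
-/

open Set

def vertNbr (p : ℤ × ℤ) : ℤ × ℤ :=
  if Even (p.1 + p.2) then (p.1, p.2 + 1) else (p.1, p.2 - 1)

@[simp] lemma vertNbr_fst (p : ℤ × ℤ) : (vertNbr p).1 = p.1 := by
  unfold vertNbr; split_ifs <;> rfl

lemma vertNbr_ne (p : ℤ × ℤ) : vertNbr p ≠ p := by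
  unfold vertNbr; split_ifs <;> simp [Prod.ext_iff]

lemma vertNbr_vertNbr (p : ℤ × ℤ) : vertNbr (vertNbr p) = p := by
  obtain ⟨a, b⟩ := p
  by_cases h : Even (a + b)
  · have : ¬Even (a + (b + 1)) := by rw [← add_assoc, Int.even_add_one]; exact not_not.2 h
    simp [vertNbr, h, this]
  · have : Even (a + (b - 1)) := by rw [← add_sub_assoc, Int.even_sub_one]; exact h
    simp [vertNbr, h, this]

lemma brickStep_true_iff {p q : ℤ × ℤ} :
    BrickStep true p q ↔ q = (p.1 + 1, p.2) ∨ (q = vertNbr p ∧ p.1 ≠ 0) := by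
  unfold BrickStep vertNbr
  by_cases h : Even (p.1 + p.2) <;> simp [h, ← Int.not_even_iff_odd]

def CanStepVert (w : ℤ) (p : ℤ × ℤ) : Prop :=
  p.1 ≠ 0 ∧ 0 ≤ (vertNbr p).2 ∧ (vertNbr p).2 ≤ w - 1

instance (w : ℤ) : DecidablePred (CanStepVert w) :=
  fun _ => inferInstanceAs (Decidable (_ ∧ _ ∧ _))

def InRect (l w : ℤ) (p : ℤ × ℤ) : Prop :=
  0 ≤ p.1 ∧ p.1 ≤ l - 1 ∧ 0 ≤ p.2 ∧ p.2 ≤ w - 1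

/-- `BrickTail l w p b t`: `p :: t` is a final segment of a first-type path in the `l × w`
rectangle. `b = false` means that `p` was reached by a vertical step, so that the path has to
go on to the right: its only other vertical step would lead back. -/
inductive BrickTail (l w : ℤ) : ℤ × ℤ → Bool → List (ℤ × ℤ) → Prop
  | last {p : ℤ × ℤ} {b : Bool} : p.1 = l - 1 → BrickTail l w p b []
  | right {p : ℤ × ℤ} {b : Bool} {t : List (ℤ × ℤ)} : p.1 + 1 ≤ l - 1 →
      BrickTail l w (p.1 + 1, p.2) true t → BrickTail l w p b ((p.1 + 1, p.2) :: t)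
  | vert {p : ℤ × ℤ} {t : List (ℤ × ℤ)} : CanStepVert w p →
      BrickTail l w (vertNbr p) false t → BrickTail l w p true (vertNbr p :: t)

namespace BrickTail

variable {l w : ℤ} {p : ℤ × ℤ} {b : Bool} {t : List (ℤ × ℤ)}

lemma of_false (h : BrickTail l w p false t) : BrickTail l w p true t := by
  cases h with
  | last h => exact last h
  | right h ht => exact right h ht

lemma false_of_head?_ne (h : BrickTail l w p true t) (ht : t.head? ≠ some (vertNbr p)) :
    BrickTail l w p false t := by
  cases h with
  | last h => exact last h
  | right h ht' => exact right h ht'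
  | vert => simp at ht

lemma fst_le_sub_one (h : BrickTail l w p b t) : p.1 ≤ l - 1 := by
  induction h with
  | last h => exact h.le
  | right h => omega
  | vert _ _ ih => simpa using ih

lemma fst_le (h : BrickTail l w p b t) : ∀ q ∈ p :: t, p.1 ≤ q.1 := by
  induction h with
  | last => simp
  | right _ _ ih =>
    intro q hq
    rcases List.mem_cons.1 hq with rfl | hq
    · rfl
    · have := ih q hq
      dsimp only at this
      omega
  | vert _ _ ih =>
    intro q hq
    rcases List.mem_cons.1 hq with rfl | hq
    · rfl
    · simpa using ih q hq

lemma fst_lt_of_false (h : BrickTail l w p false t) : ∀ q ∈ t, p.1 < q.1 := by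
  cases h with
  | last => simp
  | right _ ht =>
    intro q hq
    have := ht.fst_le q hq
    dsimp only at this
    omega

lemma head?_ne_vertNbr (h : BrickTail l w p false t) : t.head? ≠ some (vertNbr p) := by
  intro ht
  have := h.fst_lt_of_false _ (List.mem_of_mem_head? ht)
  simp at this

lemma nodup_cons (h : BrickTail l w p b t) : (p :: t).Nodup := by
  induction h with
  | last => simp
  | right _ ht ih =>
    refine List.nodup_cons.2 ⟨fun hp => ?_, ih⟩
    have := ht.fst_le _ hp
    simp at this
  | vert _ ht ih =>
    refine List.nodup_cons.2 ⟨fun hp => ?_, ih⟩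
    rcases List.mem_cons.1 hp with hp | hp
    · exact vertNbr_ne _ hp.symm
    · have := ht.fst_lt_of_false _ hp
      simp at this

lemma isChain_cons (h : BrickTail l w p b t) : (p :: t).IsChain (BrickStep true) := by
  induction h with
  | last => exact List.isChain_singleton _
  | right _ _ ih =>
    exact List.isChain_cons_cons.2 ⟨brickStep_true_iff.2 (Or.inl rfl), ih⟩
  | vert hv _ ih =>
    exact List.isChain_cons_cons.2 ⟨brickStep_true_iff.2 (Or.inr ⟨rfl, hv.1⟩), ih⟩

lemma forall_mem_inRect (h : BrickTail l w p b t) (hp : InRect l w p) :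
    ∀ q ∈ p :: t, InRect l w q := by
  induction h with
  | last => simpa using hp
  | right hl _ ih =>
    exact List.forall_mem_cons.2 ⟨hp, ih ⟨by have := hp.1; omega, hl, hp.2.2⟩⟩
  | vert hv _ ih =>
    exact List.forall_mem_cons.2
      ⟨hp, ih ⟨by simpa using hp.1, by simpa using hp.2.1, hv.2⟩⟩

lemma getLast?_fst (h : BrickTail l w p b t) : ∀ q ∈ (p :: t).getLast?, q.1 = l - 1 := by
  induction h with
  | last h => simpa using h
  | right _ _ ih => simpa using ih
  | vert _ _ ih => simpa using ih

end BrickTail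

lemma brickTail_of_isChain {l w : ℤ} {p : ℤ × ℤ} {t : List (ℤ × ℤ)}
    (hc : (p :: t).IsChain (BrickStep true)) (hn : (p :: t).Nodup)
    (hr : ∀ q ∈ p :: t, InRect l w q) (hl : ∀ q ∈ (p :: t).getLast?, q.1 = l - 1) :
    BrickTail l w p true t := by
  induction t generalizing p with
  | nil => exact .last (by simpa using hl)
  | cons r t ih =>
    rw [List.isChain_cons_cons] at hc
    have ht : BrickTail l w r true t :=
      ih hc.2 hn.of_cons (fun q hq => hr q (.tail _ hq)) (by simpa using hl)
    rcases brickStep_true_iff.1 hc.1 with rfl | ⟨rfl, hp⟩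
    · exact .right (hr (p.1 + 1, p.2) (by simp)).2.1 ht
    · refine .vert ⟨hp, (hr _ (by simp)).2.2⟩ (ht.false_of_head?_ne ?_)
      rw [vertNbr_vertNbr]
      exact fun h => (List.nodup_cons.1 hn).1 (.tail _ (List.mem_of_mem_head? h))

def brickTails (l w : ℤ) (p : ℤ × ℤ) (b : Bool) : Set (List (ℤ × ℤ)) :=
  {t | BrickTail l w p b t}

lemma brickPaths_true_eq (l w : ℤ) :
    brickPaths true l w =
      ⋃ y ∈ Icc 0 (w - 1), List.cons (0, y) '' brickTails l w (0, y) true := by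
  ext v
  simp only [mem_iUnion, mem_image, mem_Icc, brickTails, mem_ofPred_eq]
  constructor
  · rintro ⟨hne, hn, hr, hh, hl, hc⟩
    obtain ⟨⟨x, y⟩, t, rfl⟩ := List.exists_cons_of_ne_nil hne
    obtain rfl : x = 0 := hh _ rfl
    exact ⟨y, (hr _ List.mem_cons_self).2.2, t, brickTail_of_isChain hc hn hr hl, rfl⟩
  · rintro ⟨y, hy, t, ht, rfl⟩
    exact ⟨List.cons_ne_nil _ _, ht.nodup_cons,
      ht.forall_mem_inRect ⟨le_rfl, ht.fst_le_sub_one, hy⟩, by simp, ht.getLast?_fst,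
      ht.isChain_cons⟩

lemma encard_brickPaths_true (l w : ℤ) :
    (brickPaths true l w).encard =
      ∑ᶠ y ∈ Icc 0 (w - 1), (brickTails l w (0, y) true).encard := by
  rw [brickPaths_true_eq, (finite_Icc _ _).encard_biUnion]
  · exact finsum_mem_congr rfl fun y _ => List.cons_injective.encard_image _
  · intro y _ z _ hyz
    refine disjoint_left.2 ?_
    rintro _ ⟨s, _, rfl⟩ ⟨t, _, h⟩
    simp_all

section Counting

variable {l w : ℤ} {p : ℤ × ℤ}

lemma brickTails_false_of_fst_eq (hp : p.1 = l - 1) : brickTails l w p false = {[]} := by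
  ext t
  constructor
  · rintro (_ | ⟨h, _⟩)
    · rfl
    · omega
  · rintro rfl
    exact .last hp

lemma encard_brickTails_false_of_fst_lt (hp : p.1 < l - 1) :
    (brickTails l w p false).encard = (brickTails l w (p.1 + 1, p.2) true).encard := by
  have : brickTails l w p false =
      List.cons (p.1 + 1, p.2) '' brickTails l w (p.1 + 1, p.2) true := by
    ext t
    constructor
    · rintro (⟨h⟩ | ⟨_, ht⟩)
      · omega
      · exact ⟨_, ht, rfl⟩
    · rintro ⟨t, ht, rfl⟩
      exact .right (by omega) ht
  rw [this, List.cons_injective.encard_image]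

lemma brickTails_true_eq_union : brickTails l w p true = brickTails l w p false ∪
    List.cons (vertNbr p) '' {s | CanStepVert w p ∧ BrickTail l w (vertNbr p) false s} := by
  ext t
  constructor
  · intro h
    cases h with
    | last h => exact .inl (.last h)
    | right h ht => exact .inl (.right h ht)
    | vert hv ht => exact .inr ⟨_, ⟨hv, ht⟩, rfl⟩
  · rintro (h | ⟨s, ⟨hv, hs⟩, rfl⟩)
    · exact BrickTail.of_false h
    · exact .vert hv hs

lemma encard_brickTails_true : (brickTails l w p true).encard = (brickTails l w p false).encard +
    if CanStepVert w p then (brickTails l w (vertNbr p) false).encard else 0 := by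
  have hdisj : Disjoint (brickTails l w p false)
      (List.cons (vertNbr p) '' {s | CanStepVert w p ∧ BrickTail l w (vertNbr p) false s}) := by
    refine disjoint_left.2 ?_
    rintro _ h ⟨s, _, rfl⟩
    exact BrickTail.head?_ne_vertNbr h rfl
  rw [brickTails_true_eq_union, encard_union_eq hdisj, List.cons_injective.encard_image]
  split_ifs with hv <;> simp [hv, brickTails]

end Counting

def rowWeight (y : ℤ) : ℕ∞ := if y = 1 ∨ y = 2 then 2 else 1

lemma encard_brickTails_true_of_odd_column {l x : ℤ} (hx : Odd x) (c : ℕ∞)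
    (hc : ∀ y ∈ Icc 0 3, (brickTails l 4 (x, y) false).encard = c) :
    ∀ y ∈ Icc 0 3, (brickTails l 4 (x, y) true).encard = rowWeight y * c := by
  rintro y ⟨h0, h3⟩
  have hx0 : x ≠ 0 := by rintro rfl; simp at hx
  have hx' : ¬Even x := Int.not_even_iff_odd.2 hx
  rw [encard_brickTails_true]
  interval_cases y <;>
    simp +decide [CanStepVert, vertNbr, rowWeight, hc, hx, hx', hx0, Int.even_add] <;> ring

lemma encard_brickTails_true_of_even_column {l x : ℤ} (hx : Even x) (hx0 : x ≠ 0) (c : ℕ∞)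
    (hc : ∀ y ∈ Icc 0 3, (brickTails l 4 (x, y) false).encard = rowWeight y * c) :
    ∀ y ∈ Icc 0 3, (brickTails l 4 (x, y) true).encard = 3 * c := by
  rintro y ⟨h0, h3⟩
  have hx' : ¬Odd x := Int.not_odd_iff_even.2 hx
  rw [encard_brickTails_true]
  interval_cases y <;>
    simp +decide [CanStepVert, vertNbr, rowWeight, hc, hx, hx', hx0, Int.even_add] <;> ring

lemma encard_brickTails_width_four {l : ℤ} (m : ℕ) {x : ℤ} (hx : Odd x) (hx_pos : 0 < x)
    (hxl : x + 2 * m = l - 1) :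
    ∀ y ∈ Icc 0 3, (brickTails l 4 (x, y) true).encard = rowWeight y * 3 ^ m := by
  induction m generalizing x with
  | zero =>
    refine encard_brickTails_true_of_odd_column hx 1 fun y _ => ?_
    rw [brickTails_false_of_fst_eq (by simpa using hxl), encard_singleton]
  | succ m ih =>
    have hnext : ∀ y ∈ Icc 0 3,
        (brickTails l 4 (x + 1, y) false).encard = rowWeight y * 3 ^ m :=
      fun y hy => by
        rw [encard_brickTails_false_of_fst_lt (by push_cast at hxl; omega)]
        exact ih (by simpa [add_assoc] using hx.add_even even_two) (by omega)
          (by push_cast at hxl ⊢; omega) y hy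
    have hmid := encard_brickTails_true_of_even_column (hx.add_odd odd_one) (by omega) _ hnext
    refine encard_brickTails_true_of_odd_column hx _ fun y hy => ?_
    rw [encard_brickTails_false_of_fst_lt (by push_cast at hxl; omega), hmid y hy, pow_succ']

/-- For every integer `k ≥ 1`, the number of brick-wall lattice paths of the
first type in the rectangle `{0,…,2k−1} × {0,1,2,3}` (width 4, even length
`l = 2k`) equals `6 · 3^(k−1)`. -/
theorem brickPaths_first_width_four_even_length (k : ℕ) (hk : 1 ≤ k) :
    (brickPaths true (2 * (k : ℤ)) 4).ncard = 6 * 3 ^ (k - 1) := by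
  have hstart : ∀ y ∈ Icc (0 : ℤ) 3,
      (brickTails (2 * k) 4 (0, y) true).encard = rowWeight y * 3 ^ (k - 1) := fun y hy => by
    rw [encard_brickTails_true, if_neg fun h => h.1 rfl, add_zero,
      encard_brickTails_false_of_fst_lt (by dsimp only; omega)]
    exact encard_brickTails_width_four (k - 1) odd_one one_pos (by push_cast [hk]; ring) y hy
  have hsum : ∑ y ∈ Finset.Icc (0 : ℤ) 3, rowWeight y = 6 := by decide
  rw [ncard_def, encard_brickPaths_true, show (4 : ℤ) - 1 = 3 by norm_num,
    finsum_mem_congr rfl hstart, ← Finset.coe_Icc,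
    finsum_mem_coe_finset, ← Finset.sum_mul, hsum]
  norm_cast
end

section
/- Let M_U be the 3×3 integer matrix with rows (1,1,0), (1,1,0), (0,0,1) and let 𝔉 be the 3×3 integer matrix with rows (1,1,0), (1,1,1), (1,1,1). Then for every integer n ≥ 1, the product M_U·𝔉^n is the matrix with rows (F_{2n+1}, F_{2n+1}, F_{2n}), (F_{2n+1}, F_{2n+1}, F_{2n}), (F_{2n}, F_{2n}, F_{2n−1}). -/
/-!
Right multiplication by `𝔉` sends the matrix with rows `(a, a, b)`, `(a, a, b)`, `(b, b, c)` to
the one with rows `(2a + b, 2a + b, a + b)` twice and `(2b + c, 2b + c, b + c)`; for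
`(a, b, c) = (F (k+2), F (k+1), F k)` this is the same shape with `k` advanced by two.
Since `M_U 𝔉` already has this shape for `k = 1`, induction on `n` finishes.
-/

local notation "𝔉" => (!![1, 1, 0; 1, 1, 1; 1, 1, 1] : Matrix (Fin 3) (Fin 3) ℤ)

/-- Indexed by `k = 2n - 1` rather than by `n`, so that no truncated subtraction occurs. -/
def fibBlock (k : ℕ) : Matrix (Fin 3) (Fin 3) ℤ :=
  !![(Nat.fib (k + 2) : ℤ), Nat.fib (k + 2), Nat.fib (k + 1);
     Nat.fib (k + 2), Nat.fib (k + 2), Nat.fib (k + 1);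
     Nat.fib (k + 1), Nat.fib (k + 1), Nat.fib k]

theorem fibBlock_mul (k : ℕ) : fibBlock k * 𝔉 = fibBlock (k + 2) := by
  ext i j
  fin_cases i <;> fin_cases j <;> simp [fibBlock, Nat.fib_add_two] <;> ring

theorem mU_mul_pow_succ_eq_fibBlock (m : ℕ) :
    (!![1, 1, 0; 1, 1, 0; 0, 0, 1] : Matrix (Fin 3) (Fin 3) ℤ) * 𝔉 ^ (m + 1) =
      fibBlock (2 * m + 1) := by
  induction m with
  | zero => decide
  | succ m ih => rw [pow_succ, ← mul_assoc, ih, fibBlock_mul]; rfl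

/-- Let `M_U` be the 3×3 integer matrix with rows `(1,1,0)`, `(1,1,0)`, `(0,0,1)`
and `𝔉` the 3×3 integer matrix with rows `(1,1,0)`, `(1,1,1)`, `(1,1,1)`.
For every integer `n ≥ 1`, the product `M_U · 𝔉^n` has rows
`(F (2n+1), F (2n+1), F 2n)`, `(F (2n+1), F (2n+1), F 2n)`,
`(F 2n, F 2n, F (2n−1))`. -/
theorem mU_mul_pow_fib_matrix (n : ℕ) (hn : 1 ≤ n) :
    (!![1, 1, 0; 1, 1, 0; 0, 0, 1] : Matrix (Fin 3) (Fin 3) ℤ) *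
        (!![1, 1, 0; 1, 1, 1; 1, 1, 1] : Matrix (Fin 3) (Fin 3) ℤ) ^ n =
      !![(Nat.fib (2 * n + 1) : ℤ), (Nat.fib (2 * n + 1) : ℤ), (Nat.fib (2 * n) : ℤ);
         (Nat.fib (2 * n + 1) : ℤ), (Nat.fib (2 * n + 1) : ℤ), (Nat.fib (2 * n) : ℤ);
         (Nat.fib (2 * n) : ℤ), (Nat.fib (2 * n) : ℤ), (Nat.fib (2 * n - 1) : ℤ)] := by
  obtain ⟨m, rfl⟩ := Nat.exists_eq_add_of_le' hn
  have h_odd : 2 * (m + 1) - 1 = 2 * m + 1 := by omega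
  rw [mU_mul_pow_succ_eq_fibBlock, fibBlock, h_odd]
  rfl
end

section
/- Let 𝔉 be the 3×3 integer matrix with rows (1,1,0), (1,1,1), (1,1,1), let u = (1,1,1) be the all-ones row vector and b_0 = (1,1,1)^T the all-ones column vector. Then for every integer k ≥ 1, u·𝔉^k·b_0 = F_{2k+4}; equivalently, the sum of all nine entries of 𝔉^k equals F_{2k+4}. -/
open Matrix

/-!
The vectors `(a, b, b)` are stable under `𝔉`, which acts on them by `(a, b) ↦ (a + b, a + 2b)`:
two Fibonacci steps. Starting from `(F₁, F₂, F₂) = (1, 1, 1)`, the vector `𝔉^k (1,1,1)ᵀ` is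
therefore `(F_{2k+1}, F_{2k+2}, F_{2k+2})`, whose coordinates sum to `F_{2k+3} + F_{2k+2} = F_{2k+4}`.
-/

section

variable {R : Type*} [Semiring R]

theorem mulVec_vec3_dup_eq (a b : R) :
    (!![1, 1, 0; 1, 1, 1; 1, 1, 1] : Matrix (Fin 3) (Fin 3) R) *ᵥ ![a, b, b] =
      ![a + b, a + b + b, a + b + b] := by
  ext i
  fin_cases i <;> simp [mulVec, dotProduct, Fin.sum_univ_three, add_assoc]

theorem pow_mulVec_ones_eq_fib (k : ℕ) :
    (!![1, 1, 0; 1, 1, 1; 1, 1, 1] : Matrix (Fin 3) (Fin 3) R) ^ k *ᵥ (fun _ => 1) =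
      ![(Nat.fib (2 * k + 1) : R), Nat.fib (2 * k + 2), Nat.fib (2 * k + 2)] := by
  induction k with
  | zero =>
    ext i
    fin_cases i <;> simp
  | succ k ih =>
    have hodd : Nat.fib (2 * (k + 1) + 1) = Nat.fib (2 * k + 1) + Nat.fib (2 * k + 2) :=
      Nat.fib_add_two
    have heven : Nat.fib (2 * (k + 1) + 2) = Nat.fib (2 * (k + 1) + 1) + Nat.fib (2 * k + 2) :=
      (Nat.fib_add_two (n := 2 * k + 2)).trans (add_comm _ _)
    rw [pow_succ', ← mulVec_mulVec, ih, mulVec_vec3_dup_eq, heven, hodd]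
    push_cast
    rfl

end

theorem ones_vecMul_pow_mulVec_ones_eq_fib_general (k : ℕ) :
    (fun _ : Fin 3 => (1 : ℤ)) ⬝ᵥ
        ((!![1, 1, 0; 1, 1, 1; 1, 1, 1] : Matrix (Fin 3) (Fin 3) ℤ) ^ k).mulVec
          (fun _ : Fin 3 => (1 : ℤ)) =
      (Nat.fib (2 * k + 4) : ℤ) := by
  have hfib :
      Nat.fib (2 * k + 4) = Nat.fib (2 * k + 1) + Nat.fib (2 * k + 2) + Nat.fib (2 * k + 2) := by
    rw [Nat.fib_add_two (n := 2 * k + 2), Nat.fib_add_two (n := 2 * k + 1)]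
    ring
  rw [pow_mulVec_ones_eq_fib, hfib]
  simp [dotProduct, Fin.sum_univ_three, add_assoc]

/-- Let `𝔉` be the 3×3 integer matrix with rows `(1,1,0)`, `(1,1,1)`, `(1,1,1)`,
`u = (1,1,1)` the all-ones row vector and `b₀ = (1,1,1)ᵀ` the all-ones column
vector. For every integer `k ≥ 1`, `u · 𝔉^k · b₀ = F (2k+4)`; equivalently, the
sum of all nine entries of `𝔉^k` equals `F (2k+4)`. -/
theorem ones_vecMul_pow_mulVec_ones_eq_fib (k : ℕ) (hk : 1 ≤ k) :
    (fun _ : Fin 3 => (1 : ℤ)) ⬝ᵥ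
        ((!![1, 1, 0; 1, 1, 1; 1, 1, 1] : Matrix (Fin 3) (Fin 3) ℤ) ^ k).mulVec
          (fun _ : Fin 3 => (1 : ℤ)) =
      (Nat.fib (2 * k + 4) : ℤ) :=
  ones_vecMul_pow_mulVec_ones_eq_fib_general k
end

section
/- Let M_U be the 3×3 integer matrix with rows (1,1,0), (1,1,0), (0,0,1), let 𝔉 be the 3×3 integer matrix with rows (1,1,0), (1,1,1), (1,1,1), let u = (1,1,1) be the all-ones row vector and b_0 = (1,1,1)^T the all-ones column vector. Then for every integer k ≥ 1, u·M_U·𝔉^{k−1}·b_0 = F_{2k+3}; equivalently, the sum of all nine entries of M_U·𝔉^{k−1} equals F_{2k+3}. -/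
/-!
The vectors `(F_m, F_{m+1}, F_{m+1})` are mapped by `𝔉` to the same shape with `m` shifted by two,
and the all-ones vector is the one with `m = 1`; so `𝔉^(k-1)` sends it to
`(F_{2k-1}, F_{2k}, F_{2k})`. Finally `u · M_U = (2, 2, 1)`, and `2 F_m + 3 F_{m+1} = F_{m+4}`.
-/

open Matrix

local notation "M_U" => (!![1, 1, 0; 1, 1, 0; 0, 0, 1] : Matrix (Fin 3) (Fin 3) ℤ)

local notation "𝔉" => (!![1, 1, 0; 1, 1, 1; 1, 1, 1] : Matrix (Fin 3) (Fin 3) ℤ)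

def fibTriple (m : ℕ) : Fin 3 → ℤ :=
  ![(Nat.fib m : ℤ), (Nat.fib (m + 1) : ℤ), (Nat.fib (m + 1) : ℤ)]

lemma fibTriple_one : fibTriple 1 = fun _ => 1 := by
  ext i
  fin_cases i <;> simp [fibTriple]

lemma mulVec_fibTriple (m : ℕ) : 𝔉 *ᵥ fibTriple m = fibTriple (m + 2) := by
  have h₂ : (Nat.fib (m + 2) : ℤ) = Nat.fib m + Nat.fib (m + 1) := by
    exact_mod_cast Nat.fib_add_two
  have h₃ : (Nat.fib (m + 3) : ℤ) = Nat.fib (m + 1) + Nat.fib (m + 2) := by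
    exact_mod_cast Nat.fib_add_two
  ext i
  fin_cases i <;>
    simp only [fibTriple, mulVec, dotProduct, Fin.sum_univ_three, of_apply, cons_val', cons_val,
      cons_val_zero, cons_val_one, cons_val_fin_one, Fin.zero_eta, Fin.mk_one, Fin.reduceFinMk,
      Fin.isValue, one_mul, zero_mul, add_zero, h₂, h₃] <;>
    ring

lemma pow_mulVec_fibTriple (n m : ℕ) : (𝔉 ^ n) *ᵥ fibTriple m = fibTriple (m + 2 * n) := by
  induction n with
  | zero => simp
  | succ n ih => rw [pow_succ', ← mulVec_mulVec, ih, mulVec_fibTriple]; ring_nf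

lemma fib_add_four (m : ℕ) : Nat.fib (m + 4) = 2 * Nat.fib m + 3 * Nat.fib (m + 1) := by
  rw [Nat.fib_add m 3, show Nat.fib 3 = 2 by rfl, show Nat.fib (3 + 1) = 3 by rfl]
  ring

lemma ones_dotProduct_mU_mulVec_fibTriple (m : ℕ) :
    (fun _ : Fin 3 => (1 : ℤ)) ⬝ᵥ (M_U *ᵥ fibTriple m) = Nat.fib (m + 4) := by
  rw [fib_add_four]
  simp only [dotProduct, mulVec, of_apply, cons_val', cons_val_fin_one, fibTriple,
    Fin.sum_univ_three, Fin.isValue, cons_val_zero, cons_val_one, cons_val, one_mul, zero_mul,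
    add_zero, zero_add]
  push_cast
  ring

/-- Let `M_U` be the 3×3 integer matrix with rows `(1,1,0)`, `(1,1,0)`, `(0,0,1)`,
`𝔉` the 3×3 integer matrix with rows `(1,1,0)`, `(1,1,1)`, `(1,1,1)`,
`u = (1,1,1)` the all-ones row vector and `b₀ = (1,1,1)ᵀ` the all-ones column
vector. For every integer `k ≥ 1`, `u · M_U · 𝔉^(k−1) · b₀ = F (2k+3)`;
equivalently, the sum of all nine entries of `M_U · 𝔉^(k−1)` equals `F (2k+3)`. -/
theorem ones_vecMul_mU_mul_pow_mulVec_ones_eq_fib (k : ℕ) (hk : 1 ≤ k) :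
    (fun _ : Fin 3 => (1 : ℤ)) ⬝ᵥ
        ((!![1, 1, 0; 1, 1, 0; 0, 0, 1] : Matrix (Fin 3) (Fin 3) ℤ) *
            (!![1, 1, 0; 1, 1, 1; 1, 1, 1] : Matrix (Fin 3) (Fin 3) ℤ) ^ (k - 1)).mulVec
          (fun _ : Fin 3 => (1 : ℤ)) =
      (Nat.fib (2 * k + 3) : ℤ) := by
  obtain ⟨n, rfl⟩ := Nat.exists_eq_add_of_le hk
  nth_rw 2 [← fibTriple_one]
  rw [← mulVec_mulVec, Nat.add_sub_cancel_left, pow_mulVec_fibTriple,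
    ones_dotProduct_mU_mulVec_fibTriple]
  ring_nf
end

section
/- Let M_U be the 3×3 integer matrix with rows (1,1,0), (1,1,0), (0,0,1), let 𝔉 be the 3×3 integer matrix with rows (1,1,0), (1,1,1), (1,1,1), let u = (1,1,1) be the all-ones row vector and v = (1,1,0). Then for every integer k ≥ 1, u·M_U·𝔉^{k−1}·v^T = 2·F_{2k+1}. -/
open Matrix

/-! Read from the left: `u · M_U = (F₃, F₃, F₂)`, and a row vector of the shape
`(F_{2n+1}, F_{2n+1}, F_{2n})` is sent by `𝔉` to `(F_{2n+3}, F_{2n+3}, F_{2n+2})`, since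
`(a, b, c) · 𝔉 = (a + b + c, a + b + c, b + c)`. Hence `u · M_U · 𝔉^{k-1}` has this shape
with index `k`, and pairing it with `v = (1, 1, 0)` gives `2 F_{2k+1}`. -/

theorem vecMul_pow_eq_of_vecMul_eq {ι R : Type*} [Fintype ι] [DecidableEq ι] [Semiring R]
    {A : Matrix ι ι R} {f : ℕ → ι → R} (h : ∀ n, f n ᵥ* A = f (n + 1)) (m n : ℕ) :
    f m ᵥ* A ^ n = f (m + n) := by
  induction n with
  | zero => simp
  | succ n ih => rw [pow_succ, ← vecMul_vecMul, ih, h, add_assoc]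

def fibRow (n : ℕ) : Fin 3 → ℤ :=
  ![(Nat.fib (2 * n + 1) : ℤ), Nat.fib (2 * n + 1), Nat.fib (2 * n)]

theorem fibRow_vecMul (n : ℕ) :
    fibRow n ᵥ* !![1, 1, 0; 1, 1, 1; 1, 1, 1] = fibRow (n + 1) := by
  have h₁ : Nat.fib (2 * (n + 1)) = Nat.fib (2 * n) + Nat.fib (2 * n + 1) := Nat.fib_add_two
  have h₂ : Nat.fib (2 * (n + 1) + 1) = Nat.fib (2 * n + 1) + Nat.fib (2 * (n + 1)) :=
    Nat.fib_add_two
  ext i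
  fin_cases i <;>
    simp only [vecMul, dotProduct, fibRow, Fin.sum_univ_three, Fin.reduceFinMk, of_apply, cons_val',
      cons_val, cons_val_zero, cons_val_one, cons_val_fin_one, mul_zero, mul_one, zero_add, h₁, h₂,
      Nat.cast_add] <;>
    ring

theorem ones_vecMul_mU : (fun _ : Fin 3 => (1 : ℤ)) ᵥ* !![1, 1, 0; 1, 1, 0; 0, 0, 1] = fibRow 1 := by
  ext i
  fin_cases i <;> rfl

theorem fibRow_dotProduct (n : ℕ) : fibRow n ⬝ᵥ ![1, 1, 0] = 2 * (Nat.fib (2 * n + 1) : ℤ) := by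
  simp only [dotProduct, fibRow, Fin.sum_univ_three, cons_val_zero, cons_val_one, cons_val, mul_one,
    mul_zero, add_zero]
  ring

/-- Let `M_U` be the 3×3 integer matrix with rows `(1,1,0)`, `(1,1,0)`, `(0,0,1)`,
`𝔉` the 3×3 integer matrix with rows `(1,1,0)`, `(1,1,1)`, `(1,1,1)`,
`u = (1,1,1)` the all-ones row vector and `v = (1,1,0)`. For every integer
`k ≥ 1`, `u · M_U · 𝔉^(k−1) · vᵀ = 2 · F (2k+1)`. -/
theorem ones_vecMul_mU_mul_pow_mulVec_v_eq_two_fib (k : ℕ) (hk : 1 ≤ k) :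
    (fun _ : Fin 3 => (1 : ℤ)) ⬝ᵥ
        ((!![1, 1, 0; 1, 1, 0; 0, 0, 1] : Matrix (Fin 3) (Fin 3) ℤ) *
            (!![1, 1, 0; 1, 1, 1; 1, 1, 1] : Matrix (Fin 3) (Fin 3) ℤ) ^ (k - 1)).mulVec
          ![(1 : ℤ), 1, 0] =
      2 * (Nat.fib (2 * k + 1) : ℤ) := by
  obtain ⟨n, rfl⟩ := Nat.exists_eq_add_of_le hk
  rw [dotProduct_mulVec, ← vecMul_vecMul, ones_vecMul_mU, Nat.add_sub_cancel_left,
    vecMul_pow_eq_of_vecMul_eq fibRow_vecMul, fibRow_dotProduct]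
end

section
/- Let M_− be the 4×4 integer matrix with rows (1,0,0,0), (0,1,1,0), (0,1,1,0), (0,0,0,1) and M_+ the 4×4 integer matrix with rows (1,1,0,0), (1,1,0,0), (0,0,1,1), (0,0,1,1); let u = (1,1,1,1) be the all-ones row vector and b_0 = (1,1,1,1)^T the all-ones column vector. Then for every natural number k, u·(M_−·M_+)^k·b_0 = 4·3^k. -/
open Matrix

/-! The all-ones row vector is a left eigenvector of `M₋ * M₊` with eigenvalue `3` (every column
of `M₋ * M₊` sums to `3`), so `u (M₋ M₊)^k b₀ = 3^k (u ⬝ᵥ b₀) = 4 · 3^k`. -/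

theorem vecMul_pow_of_vecMul_eq_smul {n R : Type*} [Fintype n] [DecidableEq n] [CommSemiring R]
    {A : Matrix n n R} {v : n → R} {c : R} (h : v ᵥ* A = c • v) (k : ℕ) :
    v ᵥ* A ^ k = c ^ k • v := by
  induction k with
  | zero => simp
  | succ k ih => rw [pow_succ, ← vecMul_vecMul, ih, smul_vecMul, h, smul_smul, pow_succ]

theorem dotProduct_pow_mulVec_of_vecMul_eq_smul {n R : Type*} [Fintype n] [DecidableEq n]
    [CommSemiring R] {A : Matrix n n R} {v : n → R} {c : R} (h : v ᵥ* A = c • v) (k : ℕ)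
    (w : n → R) : v ⬝ᵥ (A ^ k *ᵥ w) = c ^ k * (v ⬝ᵥ w) := by
  rw [dotProduct_mulVec, vecMul_pow_of_vecMul_eq_smul h, smul_dotProduct, smul_eq_mul]

theorem ones_vecMul_mMinus_mul_mPlus :
    (fun _ : Fin 4 => (1 : ℤ)) ᵥ*
        ((!![1, 0, 0, 0; 0, 1, 1, 0; 0, 1, 1, 0; 0, 0, 0, 1] : Matrix (Fin 4) (Fin 4) ℤ) *
          !![1, 1, 0, 0; 1, 1, 0, 0; 0, 0, 1, 1; 0, 0, 1, 1]) =
      (3 : ℤ) • fun _ : Fin 4 => (1 : ℤ) := by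
  ext i
  fin_cases i <;> rfl

/-- Let `M₋` be the 4×4 integer matrix with rows `(1,0,0,0)`, `(0,1,1,0)`,
`(0,1,1,0)`, `(0,0,0,1)` and `M₊` the 4×4 integer matrix with rows `(1,1,0,0)`,
`(1,1,0,0)`, `(0,0,1,1)`, `(0,0,1,1)`; let `u = (1,1,1,1)` be the all-ones row
vector and `b₀ = (1,1,1,1)ᵀ` the all-ones column vector. For every natural
number `k`, `u · (M₋ · M₊)^k · b₀ = 4 · 3^k`. -/
theorem ones_vecMul_pow_mMinus_mPlus_mulVec_ones (k : ℕ) :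
    (fun _ : Fin 4 => (1 : ℤ)) ⬝ᵥ
        (((!![1, 0, 0, 0; 0, 1, 1, 0; 0, 1, 1, 0; 0, 0, 0, 1] :
              Matrix (Fin 4) (Fin 4) ℤ) *
            (!![1, 1, 0, 0; 1, 1, 0, 0; 0, 0, 1, 1; 0, 0, 1, 1] :
              Matrix (Fin 4) (Fin 4) ℤ)) ^ k).mulVec
          (fun _ : Fin 4 => (1 : ℤ)) =
      4 * 3 ^ k := by
  rw [dotProduct_pow_mulVec_of_vecMul_eq_smul ones_vecMul_mMinus_mul_mPlus]
  simp [dotProduct, mul_comm]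
end
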